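/- arXiv:1307.4949 — 3 statements merged into one kernel-verified Lean document; each statement's English description precedes it below -/
import Mathlib

section
/- Let n ≥ 1, 1 < p < ∞, and let a : (0,∞) → [0,∞) be almost increasing such that a(t)/t^λ is almost decreasing for some 0 < λ < n/p and ∫₀^1 a(t)/t dt < ∞. Then there exists a constant C > 0 such that for every measurable f : ℝⁿ → [0,∞), every x ∈ ℝⁿ and every r > 0, ∫_{B(x,r)} a(|x−y|) · |x−y|^{−n} · f(y) dy ≤ C · ( ∫₀^r a(t)/t dt ) · Mf(x), where Mf(x) = sup_{ρ>0} (1/|B(x,ρ)|) ∫_{B(x,ρ)} f(y) dy is the Hardy–Littlewood maximal function and |B(x,ρ)| denotes Lebesgue measure of the ball. -/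
open MeasureTheory Set
open scoped ENNReal

/-!
On the dyadic annulus `δ < |x - y| ≤ 2δ` the almost decrease of `a(t)/t^λ` gives `a(|x - y|) ≲ a(δ)`,
so the kernel is `≲ a(δ) δ^{-n}` there and, the annulus lying in `B(x, 4δ)`, the annulus contributes
`≲ a(δ) Mf(x)`. The almost increase of `a` bounds `a(δ)` by `∫_δ^{2δ} a(t)/t dt`, and for
`δ = r/2^(k+1)` these intervals tile `(0, r]`, while `x` itself is a null set.
-/

/-- The (centered) Hardy–Littlewood maximal function of a non-negative function on `ℝⁿ`. -/
noncomputable def maximalFn (n : ℕ) (f : EuclideanSpace ℝ (Fin n) → ℝ≥0∞)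
    (x : EuclideanSpace ℝ (Fin n)) : ℝ≥0∞ :=
  ⨆ (ρ : ℝ) (_ : 0 < ρ), (volume (Metric.ball x ρ))⁻¹ * ∫⁻ y in Metric.ball x ρ, f y

section Weight

variable {a : ℝ → ℝ} {C : ℝ}

theorem apply_le_mul_apply_of_le_two_mul {lam : ℝ} (hlam : 0 ≤ lam) (hC : 0 ≤ C)
    (hdec : ∀ t₁ t₂ : ℝ, 0 < t₁ → t₁ < t₂ → a t₂ / t₂ ^ lam ≤ C * (a t₁ / t₁ ^ lam))
    {δ t : ℝ} (hδ : 0 < δ) (haδ : 0 ≤ a δ) (hδt : δ < t) (ht : t ≤ 2 * δ) :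
    a t ≤ C * 2 ^ lam * a δ := by
  have ht0 : 0 < t := hδ.trans hδt
  calc a t = a t / t ^ lam * t ^ lam := by rw [div_mul_cancel₀ _ (by positivity)]
    _ ≤ C * (a δ / δ ^ lam) * (2 * δ) ^ lam := by
        gcongr
        · exact hdec δ t hδ hδt
    _ = C * 2 ^ lam * a δ := by
        rw [Real.mul_rpow zero_le_two hδ.le]
        field_simp

theorem ofReal_le_mul_setLIntegral_Ioc (hC : 0 < C) (ha : ∀ t, 0 < t → 0 ≤ a t)
    (hinc : ∀ t₁ t₂ : ℝ, 0 < t₁ → t₁ < t₂ → a t₁ ≤ C * a t₂) {δ : ℝ} (hδ : 0 < δ) :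
    ENNReal.ofReal (a δ) ≤
      ENNReal.ofReal (2 * C) * ∫⁻ t in Ioc δ (2 * δ), ENNReal.ofReal (a t / t) := by
  have hpt : ∀ t ∈ Ioc δ (2 * δ), a δ / (2 * C * δ) ≤ a t / t := by
    rintro t ⟨hδt, ht⟩
    have ht0 : 0 < t := hδ.trans hδt
    rw [div_le_div_iff₀ (by positivity) ht0]
    calc a δ * t ≤ C * a t * (2 * δ) := by
          gcongr
          · exact mul_nonneg hC.le (ha t ht0)
          · exact hinc δ t hδ hδt
      _ = a t * (2 * C * δ) := by ring
  calc ENNReal.ofReal (a δ)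
      = ENNReal.ofReal (2 * C) * (ENNReal.ofReal (a δ / (2 * C * δ)) * ENNReal.ofReal δ) := by
        rw [← ENNReal.ofReal_mul (div_nonneg (ha δ hδ) (by positivity)),
          ← ENNReal.ofReal_mul (by positivity)]
        congr 1
        field_simp
    _ = ENNReal.ofReal (2 * C) *
          ∫⁻ _ in Ioc δ (2 * δ), ENNReal.ofReal (a δ / (2 * C * δ)) := by
        rw [setLIntegral_const, Real.volume_Ioc]
        ring_nf
    _ ≤ ENNReal.ofReal (2 * C) * ∫⁻ t in Ioc δ (2 * δ), ENNReal.ofReal (a t / t) :=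
        mul_le_mul_right (setLIntegral_mono' measurableSet_Ioc fun t ht =>
          ENNReal.ofReal_le_ofReal (hpt t ht)) _

end Weight

section Dyadic

open Function

variable {r : ℝ}

theorem iUnion_Ioc_div_two_pow (hr : 0 < r) :
    ⋃ k : ℕ, Ioc (r / 2 ^ (k + 1)) (r / 2 ^ k) = Ioc 0 r := by
  ext t
  simp only [mem_iUnion, mem_Ioc]
  constructor
  · rintro ⟨k, hkt, htk⟩
    exact ⟨lt_of_le_of_lt (by positivity) hkt,
      htk.trans (div_le_self hr.le (one_le_pow₀ one_le_two))⟩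
  · rintro ⟨ht, htr⟩
    obtain ⟨k, hk, hk'⟩ := exists_nat_pow_near ((one_le_div ht).2 htr) one_lt_two
    refine ⟨k, ?_, ?_⟩
    · rwa [div_lt_iff₀ (by positivity), mul_comm, ← div_lt_iff₀ ht]
    · rwa [le_div_iff₀ (by positivity), mul_comm, ← le_div_iff₀ ht]

theorem pairwise_disjoint_Ioc_div_two_pow (hr : 0 < r) :
    Pairwise (Disjoint on fun k : ℕ => Ioc (r / 2 ^ (k + 1)) (r / 2 ^ k)) :=
  Antitone.pairwise_disjoint_on_Ioc_succ fun _ _ hij =>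
    div_le_div_of_nonneg_left hr.le (by positivity) (pow_le_pow_right₀ one_le_two hij)

theorem setLIntegral_preimage_Ioc_le_of_dyadic {X : Type*} [MeasurableSpace X] {μ : Measure X}
    {φ : X → ℝ} (hφ : Measurable φ) {g : X → ℝ≥0∞} {h : ℝ → ℝ≥0∞} {c : ℝ≥0∞}
    (hdyadic : ∀ δ > 0, ∫⁻ y in φ ⁻¹' Ioc δ (2 * δ), g y ∂μ ≤ c * ∫⁻ t in Ioc δ (2 * δ), h t)
    (hr : 0 < r) :
    ∫⁻ y in φ ⁻¹' Ioc 0 r, g y ∂μ ≤ c * ∫⁻ t in Ioc 0 r, h t := by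
  have htwo : ∀ k : ℕ, 2 * (r / 2 ^ (k + 1)) = r / 2 ^ k := fun k => by
    rw [pow_succ]; field_simp
  rw [← iUnion_Ioc_div_two_pow hr, preimage_iUnion,
    lintegral_iUnion (fun _ => hφ measurableSet_Ioc)
      fun i j hij => (pairwise_disjoint_Ioc_div_two_pow hr hij).preimage φ,
    lintegral_iUnion (fun _ => measurableSet_Ioc) (pairwise_disjoint_Ioc_div_two_pow hr),
    ← ENNReal.tsum_mul_left]
  refine ENNReal.tsum_le_tsum fun k => ?_
  simpa only [htwo] using hdyadic _ (by positivity : 0 < r / 2 ^ (k + 1))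

end Dyadic

theorem lintegral_ball_le_maximalFn {n : ℕ} [Nontrivial (EuclideanSpace ℝ (Fin n))]
    (f : EuclideanSpace ℝ (Fin n) → ℝ≥0∞) (x : EuclideanSpace ℝ (Fin n)) {ρ : ℝ} (hρ : 0 < ρ) :
    ∫⁻ y in Metric.ball x ρ, f y ≤
      ENNReal.ofReal (ρ ^ n) * volume (Metric.ball (0 : EuclideanSpace ℝ (Fin n)) 1) *
        maximalFn n f x := by
  have hB0 : volume (Metric.ball x ρ) ≠ 0 := (Metric.measure_ball_pos volume x hρ).ne'
  have hBtop : volume (Metric.ball x ρ) ≠ ⊤ := measure_ball_lt_top.ne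
  have hmean : (volume (Metric.ball x ρ))⁻¹ * ∫⁻ y in Metric.ball x ρ, f y ≤ maximalFn n f x :=
    le_iSup₂ (f := fun ρ (_ : 0 < ρ) =>
      (volume (Metric.ball x ρ))⁻¹ * ∫⁻ y in Metric.ball x ρ, f y) ρ hρ
  calc ∫⁻ y in Metric.ball x ρ, f y
      = volume (Metric.ball x ρ) *
          ((volume (Metric.ball x ρ))⁻¹ * ∫⁻ y in Metric.ball x ρ, f y) := by
        rw [← mul_assoc, ENNReal.mul_inv_cancel hB0 hBtop, one_mul]
    _ ≤ volume (Metric.ball x ρ) * maximalFn n f x := mul_le_mul_right hmean _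
    _ = _ := by rw [Measure.addHaar_ball volume x hρ.le, finrank_euclideanSpace_fin]

theorem setLIntegral_annulus_le {n : ℕ} [Nontrivial (EuclideanSpace ℝ (Fin n))]
    {a : ℝ → ℝ} (ha : ∀ t, 0 < t → 0 ≤ a t) {C₁ C₂ lam : ℝ} (hC₁ : 0 < C₁) (hC₂ : 0 < C₂)
    (hinc : ∀ t₁ t₂ : ℝ, 0 < t₁ → t₁ < t₂ → a t₁ ≤ C₁ * a t₂) (hlam : 0 ≤ lam)
    (hdec : ∀ t₁ t₂ : ℝ, 0 < t₁ → t₁ < t₂ → a t₂ / t₂ ^ lam ≤ C₂ * (a t₁ / t₁ ^ lam))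
    (f : EuclideanSpace ℝ (Fin n) → ℝ≥0∞) (x : EuclideanSpace ℝ (Fin n)) {δ : ℝ} (hδ : 0 < δ) :
    ∫⁻ y in dist x ⁻¹' Ioc δ (2 * δ),
        ENNReal.ofReal (a (dist x y) * dist x y ^ (-(n : ℝ))) * f y ≤
      ENNReal.ofReal (C₂ * 2 ^ lam * 4 ^ n * (2 * C₁)) *
          volume (Metric.ball (0 : EuclideanSpace ℝ (Fin n)) 1) * maximalFn n f x *
        ∫⁻ t in Ioc δ (2 * δ), ENNReal.ofReal (a t / t) := by
  set K := C₂ * 2 ^ lam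
  set V := volume (Metric.ball (0 : EuclideanSpace ℝ (Fin n)) 1)
  have hkernel : ∀ y ∈ dist x ⁻¹' Ioc δ (2 * δ),
      ENNReal.ofReal (a (dist x y) * dist x y ^ (-(n : ℝ))) * f y ≤
        ENNReal.ofReal (K * a δ * δ ^ (-(n : ℝ))) * f y := by
    rintro y ⟨hδy, hy⟩
    refine mul_le_mul_left (ENNReal.ofReal_le_ofReal (mul_le_mul ?_ ?_ (by positivity)
      (mul_nonneg (by positivity) (ha δ hδ)))) _
    · exact apply_le_mul_apply_of_le_two_mul hlam hC₂.le hdec hδ (ha δ hδ) hδy hy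
    · exact Real.rpow_le_rpow_of_nonpos hδ hδy.le (by simp)
  have hsub : dist x ⁻¹' Ioc δ (2 * δ) ⊆ Metric.ball x (4 * δ) := fun y hy => by
    rw [Metric.mem_ball, dist_comm]
    linarith [hy.2]
  have hscale : K * a δ * δ ^ (-(n : ℝ)) * (4 * δ) ^ n = K * 4 ^ n * a δ := by
    rw [Real.rpow_neg hδ.le, Real.rpow_natCast, mul_pow]
    field_simp
  calc _ ≤ ∫⁻ y in dist x ⁻¹' Ioc δ (2 * δ), ENNReal.ofReal (K * a δ * δ ^ (-(n : ℝ))) * f y :=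
        setLIntegral_mono' (measurableSet_Ioc.preimage (measurable_const.dist measurable_id))
          hkernel
    _ = ENNReal.ofReal (K * a δ * δ ^ (-(n : ℝ))) * ∫⁻ y in dist x ⁻¹' Ioc δ (2 * δ), f y :=
        lintegral_const_mul' _ _ ENNReal.ofReal_ne_top
    _ ≤ ENNReal.ofReal (K * a δ * δ ^ (-(n : ℝ))) * ∫⁻ y in Metric.ball x (4 * δ), f y := by
        gcongr
    _ ≤ ENNReal.ofReal (K * a δ * δ ^ (-(n : ℝ))) *
          (ENNReal.ofReal ((4 * δ) ^ n) * V * maximalFn n f x) := by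
        gcongr
        exact lintegral_ball_le_maximalFn f x (by positivity)
    _ = ENNReal.ofReal (K * 4 ^ n) * ENNReal.ofReal (a δ) * V * maximalFn n f x := by
        rw [← ENNReal.ofReal_mul (by positivity), ← hscale,
          ENNReal.ofReal_mul (mul_nonneg (mul_nonneg (by positivity) (ha δ hδ)) (by positivity))]
        ring
    _ ≤ ENNReal.ofReal (K * 4 ^ n) *
          (ENNReal.ofReal (2 * C₁) * ∫⁻ t in Ioc δ (2 * δ), ENNReal.ofReal (a t / t)) * V *
            maximalFn n f x := by
        gcongr
        exact ofReal_le_mul_setLIntegral_Ioc hC₁ ha hinc hδ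
    _ = _ := by
        rw [ENNReal.ofReal_mul (p := K * 4 ^ n) (q := 2 * C₁) (by positivity)]
        ring

theorem ball_ae_le_preimage_dist_Ioc {X : Type*} [MetricSpace X] [MeasurableSpace X]
    {μ : Measure X} [NullSingletonClass μ] (x : X) (r : ℝ) :
    Metric.ball x r ≤ᵐ[μ] dist x ⁻¹' Ioc 0 r := by
  refine (LE.le.eventuallyLE fun y (hy : dist y x < r) => ?_).trans (insert_ae_eq_self x _).le
  rcases eq_or_ne y x with rfl | hyx
  · exact mem_insert y _
  · exact mem_insert_of_mem x ⟨dist_pos.2 hyx.symm, (dist_comm x y).trans_le hy.le⟩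

theorem local_part_le_maximal_general
    (n : ℕ) (hn : 1 ≤ n)
    (a : ℝ → ℝ) (ha : ∀ t : ℝ, 0 < t → 0 ≤ a t)
    (hinc : ∃ C > (0 : ℝ), ∀ t₁ t₂ : ℝ, 0 < t₁ → t₁ < t₂ → a t₁ ≤ C * a t₂)
    (lam : ℝ) (hlam0 : 0 < lam)
    (hdec : ∃ C > (0 : ℝ), ∀ t₁ t₂ : ℝ, 0 < t₁ → t₁ < t₂ →
      a t₂ / t₂ ^ lam ≤ C * (a t₁ / t₁ ^ lam)) :
    ∃ C > (0 : ℝ), ∀ f : EuclideanSpace ℝ (Fin n) → ℝ≥0∞, Measurable f →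
      ∀ (x : EuclideanSpace ℝ (Fin n)) (r : ℝ), 0 < r →
        (∫⁻ y in Metric.ball x r,
            ENNReal.ofReal (a (dist x y) * dist x y ^ (-(n : ℝ))) * f y) ≤
          ENNReal.ofReal C * (∫⁻ t in Ioc (0 : ℝ) r, ENNReal.ofReal (a t / t)) *
            maximalFn n f x := by
  obtain ⟨C₁, hC₁, hinc⟩ := hinc
  obtain ⟨C₂, hC₂, hdec⟩ := hdec
  have : NeZero n := ⟨by omega⟩
  set V := volume (Metric.ball (0 : EuclideanSpace ℝ (Fin n)) 1)
  have hV : V ≠ ⊤ := measure_ball_lt_top.ne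
  refine ⟨C₂ * 2 ^ lam * 4 ^ n * (2 * C₁) * V.toReal,
    mul_pos (by positivity) (ENNReal.toReal_pos (Metric.measure_ball_pos _ _ one_pos).ne' hV),
    fun f _ x r hr => ?_⟩
  calc _ ≤ ∫⁻ y in dist x ⁻¹' Ioc 0 r,
          ENNReal.ofReal (a (dist x y) * dist x y ^ (-(n : ℝ))) * f y :=
        lintegral_mono_set' (ball_ae_le_preimage_dist_Ioc x r)
    _ ≤ _ := setLIntegral_preimage_Ioc_le_of_dyadic (measurable_const.dist measurable_id)
        (fun δ hδ => setLIntegral_annulus_le ha hC₁ hC₂ hinc hlam0.le hdec f x hδ) hr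
    _ = _ := by
        rw [ENNReal.ofReal_mul (q := V.toReal) (by positivity), ENNReal.ofReal_toReal hV]
        ring

/-- Hedberg-type estimate for the local part of a generalized potential: the integral of
`a(|x-y|)|x-y|^{-n} f(y)` over `B(x,r)` is bounded by `C (∫₀^r a(t)/t dt) Mf(x)`. -/
theorem local_part_le_maximal
    (n : ℕ) (hn : 1 ≤ n) (p : ℝ) (hp : 1 < p)
    (a : ℝ → ℝ) (ha : ∀ t : ℝ, 0 < t → 0 ≤ a t)
    (hinc : ∃ C > (0 : ℝ), ∀ t₁ t₂ : ℝ, 0 < t₁ → t₁ < t₂ → a t₁ ≤ C * a t₂)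
    (lam : ℝ) (hlam0 : 0 < lam) (hlamnp : lam < n / p)
    (hdec : ∃ C > (0 : ℝ), ∀ t₁ t₂ : ℝ, 0 < t₁ → t₁ < t₂ →
      a t₂ / t₂ ^ lam ≤ C * (a t₁ / t₁ ^ lam))
    (hfin : (∫⁻ t in Ioc (0 : ℝ) 1, ENNReal.ofReal (a t / t)) < ⊤) :
    ∃ C > (0 : ℝ), ∀ f : EuclideanSpace ℝ (Fin n) → ℝ≥0∞, Measurable f →
      ∀ (x : EuclideanSpace ℝ (Fin n)) (r : ℝ), 0 < r →
        (∫⁻ y in Metric.ball x r,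
            ENNReal.ofReal (a (dist x y) * dist x y ^ (-(n : ℝ))) * f y) ≤
          ENNReal.ofReal C * (∫⁻ t in Ioc (0 : ℝ) r, ENNReal.ofReal (a t / t)) *
            maximalFn n f x :=
  local_part_le_maximal_general n hn a ha hinc lam hlam0 hdec
end

section
/- Let n ≥ 1, 1 < p < ∞, and let a : (0,∞) → [0,∞) be such that a(t)/t^λ is almost decreasing for some 0 < λ < n/p. Then there exists a constant C > 0 such that for every measurable f : ℝⁿ → [0,∞) with ‖f‖_{L^p(ℝⁿ)} ≤ 1, every x ∈ ℝⁿ and every r > 0, ∫_{ℝⁿ ∖ B(x,r)} a(|x−y|) · |x−y|^{−n} · f(y) dy ≤ C · a(r) · r^{−n/p}. -/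
open MeasureTheory Set Metric Module
open scoped ENNReal

/-!
On the complement of `B(x, r)` the almost-decreasing hypothesis bounds the kernel `a(t) t^{-n}` by
`C a(r) r^{-λ} t^{λ-n}`, so only the Riesz kernel `t^{λ-n}` remains. Hölder's inequality with the
conjugate exponent `q` reduces it to `∫_{|y| ≥ r} |y|^{(λ-n)q} dy`, which is finite since
`(λ-n)q + n < 0` (this is `λ < n/p`) and equals `r^{(λ-n)q+n}` times its value at `r = 1` by
homogeneity; its `q`-th root is `r^{λ-n/p}`.
-/

section RieszKernel

variable {E : Type*} [NormedAddCommGroup E] [NormedSpace ℝ E] [FiniteDimensional ℝ E]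
  [MeasurableSpace E] [BorelSpace E] (μ : Measure E) [μ.IsAddHaarMeasure]

theorem map_add_smul_addHaar (x : E) {r : ℝ} (hr : r ≠ 0) :
    μ.map (fun w ↦ x + r • w) = ENNReal.ofReal |(r ^ finrank ℝ E)⁻¹| • μ := by
  have hcomp : (fun w : E ↦ x + r • w) = (x + ·) ∘ (r • ·) := rfl
  rw [hcomp, ← Measure.map_map (measurable_const_add x) (measurable_const_smul r),
    Measure.map_addHaar_smul μ hr, Measure.map_smul, map_add_left_eq_self]

theorem setLIntegral_compl_ball_rpow_dist (x : E) (s : ℝ) {r : ℝ} (hr : 0 < r) :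
    ∫⁻ y in (ball x r)ᶜ, ENNReal.ofReal (dist x y ^ s) ∂μ =
      ENNReal.ofReal (r ^ (s + finrank ℝ E)) *
        ∫⁻ w in (ball 0 1)ᶜ, ENNReal.ofReal (‖w‖ ^ s) ∂μ := by
  have hpre : (fun w : E ↦ x + r • w) ⁻¹' (ball x r)ᶜ = (ball 0 1)ᶜ := by
    ext w
    simp [norm_smul, abs_of_pos hr, hr]
  have hdist : ∀ w : E, ENNReal.ofReal (dist x (x + r • w) ^ s) =
      ENNReal.ofReal (r ^ s) * ENNReal.ofReal (‖w‖ ^ s) := fun w ↦ by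
    rw [dist_self_add_right, norm_smul, Real.norm_of_nonneg hr.le,
      Real.mul_rpow hr.le (norm_nonneg w), ENNReal.ofReal_mul (by positivity)]
  have hjac : ENNReal.ofReal (r ^ finrank ℝ E) * ENNReal.ofReal |(r ^ finrank ℝ E)⁻¹| = 1 := by
    rw [← ENNReal.ofReal_mul (by positivity), abs_of_pos (by positivity),
      mul_inv_cancel₀ (by positivity), ENNReal.ofReal_one]
  calc ∫⁻ y in (ball x r)ᶜ, ENNReal.ofReal (dist x y ^ s) ∂μ
      = ENNReal.ofReal (r ^ finrank ℝ E) *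
          ∫⁻ y in (ball x r)ᶜ, ENNReal.ofReal (dist x y ^ s) ∂μ.map (fun w ↦ x + r • w) := by
        rw [map_add_smul_addHaar μ x hr.ne', Measure.restrict_smul, lintegral_smul_measure,
          smul_eq_mul, ← mul_assoc, hjac, one_mul]
    _ = ENNReal.ofReal (r ^ finrank ℝ E) *
          ∫⁻ w in (ball 0 1)ᶜ, ENNReal.ofReal (dist x (x + r • w) ^ s) ∂μ := by
        rw [setLIntegral_map measurableSet_ball.compl (by fun_prop) (by fun_prop), hpre]
    _ = ENNReal.ofReal (r ^ (s + finrank ℝ E)) *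
          ∫⁻ w in (ball 0 1)ᶜ, ENNReal.ofReal (‖w‖ ^ s) ∂μ := by
        simp_rw [hdist]
        rw [lintegral_const_mul' _ _ ENNReal.ofReal_ne_top, ← mul_assoc,
          ← ENNReal.ofReal_mul (by positivity), ← Real.rpow_natCast, ← Real.rpow_add hr, add_comm]

theorem setLIntegral_compl_unitBall_rpow_norm_lt_top {s : ℝ} (hs : s + finrank ℝ E < 0) :
    ∫⁻ w in (ball (0 : E) 1)ᶜ, ENNReal.ofReal (‖w‖ ^ s) ∂μ < ∞ := by
  have hs0 : s ≤ 0 := by linarith [(finrank ℝ E).cast_nonneg (α := ℝ)]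
  have hle : ∀ w ∈ (ball (0 : E) 1)ᶜ,
      ENNReal.ofReal (‖w‖ ^ s) ≤ ENNReal.ofReal (2 ^ (-s)) * ENNReal.ofReal ((1 + ‖w‖) ^ s) := by
    intro w hw
    have hw1 : 1 ≤ ‖w‖ := by simpa using hw
    rw [← ENNReal.ofReal_mul (Real.rpow_nonneg zero_le_two _)]
    refine ENNReal.ofReal_le_ofReal ?_
    calc ‖w‖ ^ s = 2 ^ (-s) * (2 * ‖w‖) ^ s := by
          rw [Real.mul_rpow zero_le_two (norm_nonneg w), ← mul_assoc, ← Real.rpow_add two_pos,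
            neg_add_cancel, Real.rpow_zero, one_mul]
      _ ≤ 2 ^ (-s) * (1 + ‖w‖) ^ s := by
          have := Real.rpow_le_rpow_of_nonpos (by linarith) (by linarith : 1 + ‖w‖ ≤ 2 * ‖w‖) hs0
          exact mul_le_mul_of_nonneg_left this (by positivity)
  calc ∫⁻ w in (ball (0 : E) 1)ᶜ, ENNReal.ofReal (‖w‖ ^ s) ∂μ
      ≤ ∫⁻ w in (ball (0 : E) 1)ᶜ, ENNReal.ofReal (2 ^ (-s)) * ENNReal.ofReal ((1 + ‖w‖) ^ s) ∂μ :=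
        setLIntegral_mono (by fun_prop) hle
    _ ≤ ∫⁻ w, ENNReal.ofReal (2 ^ (-s)) * ENNReal.ofReal ((1 + ‖w‖) ^ (-(-s))) ∂μ := by
        rw [neg_neg]
        exact setLIntegral_le_lintegral _ _
    _ < ∞ := by
        rw [lintegral_const_mul' _ _ ENNReal.ofReal_ne_top]
        exact ENNReal.mul_lt_top ENNReal.ofReal_lt_top (finite_integral_one_add_norm (by linarith))

theorem exists_setLIntegral_compl_ball_rpow_dist_le {s : ℝ} (hs : s + finrank ℝ E < 0) :
    ∃ c > 0, ∀ (x : E) (r : ℝ), 0 < r →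
      ∫⁻ y in (ball x r)ᶜ, ENNReal.ofReal (dist x y ^ s) ∂μ ≤
        ENNReal.ofReal (c * r ^ (s + finrank ℝ E)) := by
  set I := ∫⁻ w in (ball (0 : E) 1)ᶜ, ENNReal.ofReal (‖w‖ ^ s) ∂μ
  have hI : I ≤ ENNReal.ofReal (I.toReal + 1) :=
    (ENNReal.ofReal_toReal (setLIntegral_compl_unitBall_rpow_norm_lt_top μ hs).ne).symm.le.trans
      (ENNReal.ofReal_le_ofReal (by linarith))
  refine ⟨I.toReal + 1, by positivity, fun x r hr ↦ ?_⟩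
  rw [setLIntegral_compl_ball_rpow_dist μ x s hr, mul_comm (I.toReal + 1),
    ENNReal.ofReal_mul (by positivity)]
  gcongr

theorem exists_setLIntegral_compl_ball_rpow_dist_mul_le {p q : ℝ} (hpq : p.HolderConjugate q)
    {lam : ℝ} (hlam : lam < finrank ℝ E / p) :
    ∃ c > 0, ∀ f : E → ℝ≥0∞, AEMeasurable f μ → ∀ (x : E) (r : ℝ), 0 < r →
      ∫⁻ y in (ball x r)ᶜ, ENNReal.ofReal (dist x y ^ (lam - finrank ℝ E)) * f y ∂μ ≤
        ENNReal.ofReal (c * r ^ (lam - finrank ℝ E / p)) * (∫⁻ y, f y ^ p ∂μ) ^ (1 / p) := by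
  set d : ℝ := (finrank ℝ E : ℝ)
  have hp : 0 < p := hpq.pos
  have hq : 0 < q := hpq.symm.pos
  have hexp : (lam - d) * q + d = (lam - d / p) * q := by
    have hinv : p⁻¹ = 1 - q⁻¹ := by linarith [hpq.inv_add_inv_eq_one]
    rw [div_eq_mul_inv, hinv]
    field_simp
    ring
  have hs : (lam - d) * q + d < 0 := hexp ▸ mul_neg_of_neg_of_pos (by linarith) hq
  obtain ⟨c, hc, hrad⟩ := exists_setLIntegral_compl_ball_rpow_dist_le μ hs
  refine ⟨c ^ (1 / q), by positivity, fun f hf x r hr ↦ ?_⟩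
  have hpow : ∀ y, ENNReal.ofReal (dist x y ^ (lam - d)) ^ q =
      ENNReal.ofReal (dist x y ^ ((lam - d) * q)) := fun y ↦ by
    rw [ENNReal.ofReal_rpow_of_nonneg (by positivity) hq.le, ← Real.rpow_mul dist_nonneg]
  calc ∫⁻ y in (ball x r)ᶜ, ENNReal.ofReal (dist x y ^ (lam - d)) * f y ∂μ
      ≤ (∫⁻ y in (ball x r)ᶜ, ENNReal.ofReal (dist x y ^ (lam - d)) ^ q ∂μ) ^ (1 / q) *
          (∫⁻ y in (ball x r)ᶜ, f y ^ p ∂μ) ^ (1 / p) :=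
        ENNReal.lintegral_mul_le_Lp_mul_Lq _ hpq.symm (by fun_prop) hf.restrict
    _ ≤ ENNReal.ofReal (c * r ^ ((lam - d) * q + d)) ^ (1 / q) * (∫⁻ y, f y ^ p ∂μ) ^ (1 / p) := by
        simp_rw [hpow]
        exact mul_le_mul' (ENNReal.rpow_le_rpow (hrad x r hr) (by positivity))
          (ENNReal.rpow_le_rpow (setLIntegral_le_lintegral _ _) (by positivity))
    _ = ENNReal.ofReal (c ^ (1 / q) * r ^ (lam - d / p)) * (∫⁻ y, f y ^ p ∂μ) ^ (1 / p) := by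
        rw [ENNReal.ofReal_rpow_of_nonneg (by positivity) (by positivity),
          Real.mul_rpow hc.le (by positivity), ← Real.rpow_mul hr.le, hexp,
          mul_assoc, mul_one_div_cancel hq.ne', mul_one]

theorem ae_restrict_compl_ball_lt_dist (x : E) {r : ℝ} (hr : r ≠ 0) :
    ∀ᵐ y ∂μ.restrict (ball x r)ᶜ, r < dist x y := by
  have hsphere : ∀ᵐ y ∂μ, y ∉ sphere x r :=
    measure_eq_zero_iff_ae_notMem.mp (Measure.addHaar_sphere_of_ne_zero μ x hr)
  filter_upwards [ae_restrict_of_ae hsphere, ae_restrict_mem measurableSet_ball.compl]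
    with y hy hy'
  simp only [mem_sphere, mem_compl_iff, mem_ball, not_lt] at hy hy'
  rw [dist_comm]
  exact lt_of_le_of_ne hy' (Ne.symm hy)

end RieszKernel

theorem mul_rpow_neg_le_of_div_rpow_le {A B C lam m r t : ℝ} (hr : 0 ≤ r) (ht : 0 < t)
    (h : A / t ^ lam ≤ C * (B / r ^ lam)) :
    A * t ^ (-m) ≤ C * B * r ^ (-lam) * t ^ (lam - m) := by
  have hA : A ≤ C * (B / r ^ lam) * t ^ lam := (div_le_iff₀ (Real.rpow_pos_of_pos ht lam)).1 h
  calc A * t ^ (-m) ≤ C * (B / r ^ lam) * t ^ lam * t ^ (-m) :=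
        mul_le_mul_of_nonneg_right hA (Real.rpow_nonneg ht.le _)
    _ = C * B * r ^ (-lam) * t ^ (lam - m) := by
        rw [Real.rpow_neg hr, sub_eq_add_neg, Real.rpow_add ht]
        ring

theorem far_part_le_general
    (n : ℕ) (p : ℝ) (hp : 1 < p)
    (a : ℝ → ℝ)
    (lam : ℝ) (hlamnp : lam < n / p)
    (hdec : ∃ C > (0 : ℝ), ∀ t₁ t₂ : ℝ, 0 < t₁ → t₁ < t₂ →
      a t₂ / t₂ ^ lam ≤ C * (a t₁ / t₁ ^ lam)) :
    ∃ C > (0 : ℝ), ∀ f : EuclideanSpace ℝ (Fin n) → ℝ≥0∞, Measurable f →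
      (∫⁻ y, f y ^ p) ^ (1 / p) ≤ 1 →
      ∀ (x : EuclideanSpace ℝ (Fin n)) (r : ℝ), 0 < r →
        (∫⁻ y in (Metric.ball x r)ᶜ,
            ENNReal.ofReal (a (dist x y) * dist x y ^ (-(n : ℝ))) * f y) ≤
          ENNReal.ofReal (C * a r * r ^ (-(n : ℝ) / p)) := by
  obtain ⟨Cd, hCd, hdec⟩ := hdec
  obtain ⟨c, hc, hriesz⟩ := exists_setLIntegral_compl_ball_rpow_dist_mul_le volume
    (Real.HolderConjugate.conjExponent hp) (by rwa [finrank_euclideanSpace_fin])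
  simp only [finrank_euclideanSpace_fin] at hriesz
  refine ⟨Cd * c, by positivity, fun f hf hfp x r hr ↦ ?_⟩
  set K := Cd * a r * r ^ (-lam)
  calc ∫⁻ y in (ball x r)ᶜ, ENNReal.ofReal (a (dist x y) * dist x y ^ (-(n : ℝ))) * f y
      ≤ ∫⁻ y in (ball x r)ᶜ, ENNReal.ofReal K * (ENNReal.ofReal (dist x y ^ (lam - n)) * f y) := by
        refine lintegral_mono_ae ?_
        filter_upwards [ae_restrict_compl_ball_lt_dist volume x hr.ne'] with y hy
        rw [← mul_assoc, ← ENNReal.ofReal_mul' (by positivity)]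
        exact mul_le_mul_left (ENNReal.ofReal_le_ofReal
          (mul_rpow_neg_le_of_div_rpow_le hr.le (hr.trans hy) (hdec r _ hr hy))) _
    _ = ENNReal.ofReal K *
          ∫⁻ y in (ball x r)ᶜ, ENNReal.ofReal (dist x y ^ (lam - n)) * f y :=
        lintegral_const_mul' _ _ ENNReal.ofReal_ne_top
    _ ≤ ENNReal.ofReal K * (ENNReal.ofReal (c * r ^ (lam - n / p)) * 1) := by
        gcongr
        exact (hriesz f hf.aemeasurable x r hr).trans (by gcongr)
    _ = ENNReal.ofReal (Cd * c * a r * r ^ (-(n : ℝ) / p)) := by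
        rw [mul_one, ← ENNReal.ofReal_mul' (by positivity)]
        congr 1
        rw [show K * (c * r ^ (lam - n / p)) = Cd * c * a r * (r ^ (-lam) * r ^ (lam - n / p)) by
          ring, ← Real.rpow_add hr, neg_div]
        ring_nf

/-- Estimate for the far-away part of a generalized potential: if `a(t)/t^λ` is almost
decreasing for some `0 < λ < n/p` and `‖f‖_{L^p} ≤ 1`, then the integral of
`a(|x-y|)|x-y|^{-n} f(y)` over the complement of `B(x,r)` is at most `C a(r) r^{-n/p}`. -/
theorem far_part_le
    (n : ℕ) (hn : 1 ≤ n) (p : ℝ) (hp : 1 < p)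
    (a : ℝ → ℝ) (ha : ∀ t : ℝ, 0 < t → 0 ≤ a t)
    (lam : ℝ) (hlam0 : 0 < lam) (hlamnp : lam < n / p)
    (hdec : ∃ C > (0 : ℝ), ∀ t₁ t₂ : ℝ, 0 < t₁ → t₁ < t₂ →
      a t₂ / t₂ ^ lam ≤ C * (a t₁ / t₁ ^ lam)) :
    ∃ C > (0 : ℝ), ∀ f : EuclideanSpace ℝ (Fin n) → ℝ≥0∞, Measurable f →
      (∫⁻ y, f y ^ p) ^ (1 / p) ≤ 1 →
      ∀ (x : EuclideanSpace ℝ (Fin n)) (r : ℝ), 0 < r →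
        (∫⁻ y in (Metric.ball x r)ᶜ,
            ENNReal.ofReal (a (dist x y) * dist x y ^ (-(n : ℝ))) * f y) ≤
          ENNReal.ofReal (C * a r * r ^ (-(n : ℝ) / p)) :=
  far_part_le_general n p hp a lam hlamnp hdec
end

section
/- Let n ≥ 1, 1 < p < ∞, and let a : (0,∞) → [0,∞) be almost increasing such that a(t)/t^λ is almost decreasing for some 0 < λ < n/p and ∫₀^1 a(t)/t dt < ∞. Set A(r) = ∫₀^r a(t)/t dt and define the generalized potential I_a f(x) = ∫_{ℝⁿ} a(|x−y|) · |x−y|^{−n} · f(y) dy. Then there exists a constant C > 0 such that for every measurable f : ℝⁿ → [0,∞) with ‖f‖_{L^p(ℝⁿ)} ≤ 1, every x ∈ ℝⁿ and every r > 0, I_a f(x) ≤ C · ( Mf(x) + r^{−n/p} ) · A(r), where Mf(x) = sup_{ρ>0} (1/|B(x,ρ)|) ∫_{B(x,ρ)} f(y) dy is the Hardy–Littlewood maximal function. -/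
/-!
Split `ℝⁿ \ {x}` into the dyadic shells `2ᵏ r ≤ |x - y| < 2ᵏ⁺¹ r`, `k ∈ ℤ`. Since `a(t)/t^λ` is
almost decreasing, `a(t) ≤ C (t/s)^λ a(s)` for `s ≤ t`; in particular `a` is doubling, so on the
`k`-th shell the kernel is at most a constant times `a(2ᵏ r) (2ᵏ r)⁻ⁿ`, and the shell contributes at
most a constant times `a(2ᵏ r)` times the mean of `f` over `B(x, 2ᵏ⁺¹ r)`.

For the inner shells (`k < 0`) the mean is at most `Mf(x)`, and doubling gives
`a(2ᵏ r) ≲ ∫_{2ᵏ⁻¹ r}^{2ᵏ r} a(t)/t dt`; these intervals are disjoint in `(0, r]`, so the sum is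
`≲ Mf(x) A(r)`. For the outer shells (`k ≥ 0`) Hölder bounds the mean by `|B|^{-1/p}`, and
`a(2ᵏ r) ≲ 2^{kλ} a(r)`, so the sum is `≲ a(r) r^{-n/p} Σ_k 2^{k(λ - n/p)}`, a convergent
geometric series because `λ < n/p`; finally `a(r) ≲ A(r)` by doubling once more.
-/

open MeasureTheory Set
open scoped ENNReal

open Metric Function

def PowerGrowth (a : ℝ → ℝ) (C lam : ℝ) : Prop :=
  ∀ ⦃s t : ℝ⦄, 0 < s → s ≤ t → a t ≤ C * (t / s) ^ lam * a s

def HasDoublingBound (a : ℝ → ℝ) (D : ℝ) : Prop :=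
  ∀ ⦃s t : ℝ⦄, 0 < s → s ≤ t → t ≤ 2 * s → a t ≤ D * a s

theorem two_mul_two_zpow_mul (k : ℤ) (r : ℝ) : 2 * (2 ^ k * r) = 2 ^ (k + 1) * r := by
  rw [zpow_add_one₀ two_ne_zero]; ring

theorem pairwise_disjoint_Ico_two_zpow_mul {r : ℝ} (hr : 0 ≤ r) :
    Pairwise (Disjoint on fun k : ℤ => Ico (2 ^ k * r) (2 * (2 ^ k * r))) := by
  have hmono : Monotone fun k : ℤ => (2 : ℝ) ^ k * r := fun k l hkl => by
    dsimp only; gcongr; norm_num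
  convert hmono.pairwise_disjoint_on_Ico_succ using 3 with k
  rw [Order.succ_eq_add_one, zpow_add_one₀ two_ne_zero]
  ring_nf

theorem iUnion_Ico_two_zpow_mul {r : ℝ} (hr : 0 < r) :
    ⋃ k : ℤ, Ico (2 ^ k * r) (2 * (2 ^ k * r)) = Ioi 0 := by
  refine Subset.antisymm (iUnion_subset fun k t ht => ?_) fun t (ht : 0 < t) => ?_
  · exact (by positivity : (0 : ℝ) < 2 ^ k * r).trans_le ht.1
  obtain ⟨k, hk₁, hk₂⟩ := exists_mem_Ico_zpow (div_pos ht hr) one_lt_two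
  refine mem_iUnion.mpr ⟨k, ?_, ?_⟩
  · rwa [le_div_iff₀ hr] at hk₁
  · rwa [div_lt_iff₀ hr, zpow_add_one₀ two_ne_zero, mul_comm _ (2 : ℝ), mul_assoc] at hk₂

section Weight

variable {a : ℝ → ℝ} {C D lam r : ℝ}

theorem powerGrowth_of_almostDecreasing (ha : ∀ t, 0 < t → 0 ≤ a t)
    (hdec : ∀ t₁ t₂ : ℝ, 0 < t₁ → t₁ < t₂ → a t₂ / t₂ ^ lam ≤ C * (a t₁ / t₁ ^ lam)) :
    PowerGrowth a (max 1 C) lam := by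
  intro s t hs hst
  rcases hst.eq_or_lt with rfl | hlt
  · rw [div_self hs.ne', Real.one_rpow, mul_one]
    exact le_mul_of_one_le_left (ha s hs) (le_max_left 1 C)
  have ht := hs.trans hlt
  calc a t = a t / t ^ lam * t ^ lam := by field_simp
    _ ≤ C * (a s / s ^ lam) * t ^ lam := by gcongr; exact hdec s t hs hlt
    _ = C * (t / s) ^ lam * a s := by rw [Real.div_rpow ht.le hs.le]; field_simp
    _ ≤ max 1 C * (t / s) ^ lam * a s := by gcongr; exacts [ha s hs, le_max_right 1 C]

theorem PowerGrowth.hasDoublingBound (hg : PowerGrowth a C lam) (hC : 0 ≤ C)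
    (ha : ∀ t, 0 < t → 0 ≤ a t) : HasDoublingBound a (C * 2 ^ |lam|) := by
  intro s t hs hst ht
  have hts : 1 ≤ t / s := (one_le_div hs).mpr hst
  have hpow : (t / s) ^ lam ≤ 2 ^ |lam| := calc
    (t / s) ^ lam ≤ (t / s) ^ |lam| := Real.rpow_le_rpow_of_exponent_le hts (le_abs_self _)
    _ ≤ 2 ^ |lam| := by gcongr; rw [div_le_iff₀ hs]; linarith
  calc a t ≤ C * (t / s) ^ lam * a s := hg hs hst
    _ ≤ C * 2 ^ |lam| * a s := by gcongr; exact ha s hs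

theorem HasDoublingBound.ofReal_le_lintegral_Ico (hD : HasDoublingBound a D) (hD0 : 0 ≤ D)
    (ha : ∀ t, 0 < t → 0 ≤ a t) {ρ : ℝ} (hρ : 0 < ρ) :
    ENNReal.ofReal (a (2 * ρ)) ≤
      2 * ENNReal.ofReal D * ∫⁻ t in Ico ρ (2 * ρ), ENNReal.ofReal (a t / t) := by
  have hpoint : ∀ t ∈ Ico ρ (2 * ρ),
      ENNReal.ofReal (a (2 * ρ) / (2 * ρ)) ≤ ENNReal.ofReal D * ENNReal.ofReal (a t / t) := by
    rintro t ⟨hρt, ht2⟩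
    have ht : 0 < t := hρ.trans_le hρt
    rw [← ENNReal.ofReal_mul hD0]
    refine ENNReal.ofReal_le_ofReal ?_
    calc a (2 * ρ) / (2 * ρ) ≤ D * a t / (2 * ρ) := by
          gcongr; exact hD ht ht2.le (by linarith)
      _ ≤ D * (a t / t) := by
          rw [← mul_div_assoc]; gcongr; exact mul_nonneg hD0 (ha t ht)
  calc ENNReal.ofReal (a (2 * ρ))
      = 2 * ∫⁻ _ in Ico ρ (2 * ρ), ENNReal.ofReal (a (2 * ρ) / (2 * ρ)) := by
        have h2ρ : a (2 * ρ) = 2 * (a (2 * ρ) / (2 * ρ) * (2 * ρ - ρ)) := by field_simp; ring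
        rw [setLIntegral_const, Real.volume_Ico, ← ENNReal.ofReal_mul
          (div_nonneg (ha _ (by positivity)) (by positivity)), ← ENNReal.ofReal_ofNat 2,
          ← ENNReal.ofReal_mul zero_le_two, ← h2ρ]
    _ ≤ 2 * ∫⁻ t in Ico ρ (2 * ρ), ENNReal.ofReal D * ENNReal.ofReal (a t / t) := by
        gcongr 2 * ?_; exact setLIntegral_mono' measurableSet_Ico hpoint
    _ = _ := by rw [lintegral_const_mul' _ _ ENNReal.ofReal_ne_top, mul_assoc]

theorem HasDoublingBound.ofReal_le_lintegral_Ioc (hD : HasDoublingBound a D) (hD0 : 0 ≤ D)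
    (ha : ∀ t, 0 < t → 0 ≤ a t) (hr : 0 < r) :
    ENNReal.ofReal (a r) ≤ 2 * ENNReal.ofReal D * ∫⁻ t in Ioc 0 r, ENNReal.ofReal (a t / t) := by
  have h := hD.ofReal_le_lintegral_Ico hD0 ha (half_pos hr)
  rw [mul_div_cancel₀ r two_ne_zero] at h
  refine h.trans (by gcongr; exact fun t ht => ⟨(half_pos hr).trans_le ht.1, ht.2.le⟩)

theorem HasDoublingBound.tsum_ofReal_le_lintegral (hD : HasDoublingBound a D) (hD0 : 0 ≤ D)
    (ha : ∀ t, 0 < t → 0 ≤ a t) (hr : 0 < r) :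
    ∑' j : ℕ, ENNReal.ofReal (a (2 ^ (-((j : ℤ) + 1)) * r)) ≤
      2 * ENNReal.ofReal D * ∫⁻ t in Ioc 0 r, ENNReal.ofReal (a t / t) := by
  let k : ℕ → ℤ := fun j => -((j : ℤ) + 2)
  have hk : Injective k := fun i j h => by simpa [k] using h
  have hsub : (⋃ j, Ico (2 ^ k j * r) (2 * (2 ^ k j * r))) ⊆ Ioc 0 r := by
    refine iUnion_subset fun j t ht => ⟨(by positivity : (0 : ℝ) < 2 ^ k j * r).trans_le ht.1, ?_⟩
    have hk1 : (2 : ℝ) ^ (k j + 1) ≤ 1 :=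
      zpow_le_one_of_nonpos₀ one_le_two (by dsimp only [k]; omega)
    have ht2 := ht.2
    rw [two_mul_two_zpow_mul] at ht2
    nlinarith
  calc ∑' j : ℕ, ENNReal.ofReal (a (2 ^ (-((j : ℤ) + 1)) * r))
      ≤ ∑' j : ℕ, 2 * ENNReal.ofReal D *
          ∫⁻ t in Ico (2 ^ k j * r) (2 * (2 ^ k j * r)), ENNReal.ofReal (a t / t) := by
        refine ENNReal.tsum_le_tsum fun j => ?_
        convert hD.ofReal_le_lintegral_Ico hD0 ha (by positivity : (0 : ℝ) < 2 ^ k j * r) using 3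
        rw [two_mul_two_zpow_mul]; dsimp only [k]; ring_nf
    _ = 2 * ENNReal.ofReal D *
          ∫⁻ t in ⋃ j, Ico (2 ^ k j * r) (2 * (2 ^ k j * r)), ENNReal.ofReal (a t / t) := by
        rw [ENNReal.tsum_mul_left, lintegral_iUnion (fun _ => measurableSet_Ico)
          ((pairwise_disjoint_Ico_two_zpow_mul hr.le).comp_of_injective hk)]
    _ ≤ _ := by gcongr

theorem PowerGrowth.tsum_ofReal_mul_rpow_le (hg : PowerGrowth a C lam) (hC : 0 ≤ C)
    (ha : ∀ t, 0 < t → 0 ≤ a t) (s : ℝ) (hr : 0 < r) :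
    ∑' j : ℕ, ENNReal.ofReal (a (2 ^ (j : ℤ) * r) * (2 ^ (j : ℤ) * r) ^ s) ≤
      ENNReal.ofReal C * (1 - ENNReal.ofReal (2 ^ (lam + s)))⁻¹ * ENNReal.ofReal (a r * r ^ s) := by
  have hterm : ∀ j : ℕ, a (2 ^ (j : ℤ) * r) * (2 ^ (j : ℤ) * r) ^ s ≤
      C * (a r * r ^ s) * (2 ^ (lam + s)) ^ j := by
    intro j
    have h2j : (1 : ℝ) ≤ 2 ^ j := one_le_pow₀ one_le_two
    have hgrow := hg hr (le_mul_of_one_le_left hr.le h2j : r ≤ 2 ^ j * r)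
    rw [mul_div_cancel_right₀ _ hr.ne'] at hgrow
    rw [zpow_natCast, Real.mul_rpow (by positivity) hr.le, ← Real.rpow_pow_comm zero_le_two,
      Real.rpow_add two_pos, mul_pow, Real.rpow_pow_comm zero_le_two,
      Real.rpow_pow_comm zero_le_two]
    calc a (2 ^ j * r) * ((2 ^ j) ^ s * r ^ s)
        ≤ C * (2 ^ j) ^ lam * a r * ((2 ^ j) ^ s * r ^ s) := by gcongr
      _ = _ := by ring
  have hθ : (0 : ℝ) ≤ 2 ^ (lam + s) := by positivity
  have har : 0 ≤ C * (a r * r ^ s) := mul_nonneg hC (mul_nonneg (ha r hr) (by positivity))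
  calc ∑' j : ℕ, ENNReal.ofReal (a (2 ^ (j : ℤ) * r) * (2 ^ (j : ℤ) * r) ^ s)
      ≤ ∑' j : ℕ, ENNReal.ofReal (C * (a r * r ^ s)) * ENNReal.ofReal (2 ^ (lam + s)) ^ j :=
        ENNReal.tsum_le_tsum fun j => by
          rw [← ENNReal.ofReal_pow hθ, ← ENNReal.ofReal_mul har]
          exact ENNReal.ofReal_le_ofReal (hterm j)
    _ = _ := by
        rw [ENNReal.tsum_mul_left, ENNReal.tsum_geometric, ENNReal.ofReal_mul hC]
        ring

end Weight

theorem lintegral_eq_tsum_setLIntegral_dyadic_shell {X : Type*} [MetricSpace X]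
    [MeasurableSpace X] [OpensMeasurableSpace X] (μ : Measure X) [NullSingletonClass μ]
    (F : X → ℝ≥0∞) (x : X) {r : ℝ} (hr : 0 < r) :
    ∫⁻ y, F y ∂μ = ∑' k : ℤ, ∫⁻ y in dist x ⁻¹' Ico (2 ^ k * r) (2 * (2 ^ k * r)), F y ∂μ := by
  have hshells : ⋃ k : ℤ, dist x ⁻¹' Ico (2 ^ k * r) (2 * (2 ^ k * r)) = {x}ᶜ := by
    ext y
    simp [← preimage_iUnion, iUnion_Ico_two_zpow_mul hr, eq_comm]
  have hdist : Continuous (dist x) := continuous_const.dist continuous_id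
  rw [← lintegral_iUnion (fun k => hdist.measurable measurableSet_Ico)
    ((pairwise_disjoint_Ico_two_zpow_mul hr.le).mono fun _ _ h => h.preimage _), hshells,
    restrict_compl_singleton]

theorem setLIntegral_dyadic_shell_le {X : Type*} [PseudoMetricSpace X] [MeasurableSpace X]
    [OpensMeasurableSpace X] (μ : Measure X) {a : ℝ → ℝ} {D s ρ : ℝ}
    (hD : HasDoublingBound a D) (hD0 : 0 ≤ D) (ha : ∀ t, 0 < t → 0 ≤ a t) (hs : 0 ≤ s)
    (f : X → ℝ≥0∞) (x : X) (hρ : 0 < ρ) :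
    ∫⁻ y in dist x ⁻¹' Ico ρ (2 * ρ), ENNReal.ofReal (a (dist x y) * dist x y ^ (-s)) * f y ∂μ ≤
      ENNReal.ofReal (D * a ρ * ρ ^ (-s)) * ∫⁻ y in ball x (2 * ρ), f y ∂μ := by
  have hdist : Continuous (dist x) := continuous_const.dist continuous_id
  have hkernel : ∀ y ∈ dist x ⁻¹' Ico ρ (2 * ρ),
      a (dist x y) * dist x y ^ (-s) ≤ D * a ρ * ρ ^ (-s) := by
    rintro y ⟨hρy, hy2⟩
    have hy : 0 < dist x y := hρ.trans_le hρy
    exact mul_le_mul (hD hρ hρy hy2.le) (Real.rpow_le_rpow_of_nonpos hρ hρy (neg_nonpos.mpr hs))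
      (Real.rpow_nonneg hy.le _) (mul_nonneg hD0 (ha ρ hρ))
  calc ∫⁻ y in dist x ⁻¹' Ico ρ (2 * ρ), ENNReal.ofReal (a (dist x y) * dist x y ^ (-s)) * f y ∂μ
      ≤ ∫⁻ y in dist x ⁻¹' Ico ρ (2 * ρ), ENNReal.ofReal (D * a ρ * ρ ^ (-s)) * f y ∂μ :=
        setLIntegral_mono' (hdist.measurable measurableSet_Ico) fun y hy => by
          gcongr ENNReal.ofReal ?_ * _; exact hkernel y hy
    _ = ENNReal.ofReal (D * a ρ * ρ ^ (-s)) * ∫⁻ y in dist x ⁻¹' Ico ρ (2 * ρ), f y ∂μ :=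
        lintegral_const_mul' _ _ ENNReal.ofReal_ne_top
    _ ≤ ENNReal.ofReal (D * a ρ * ρ ^ (-s)) * ∫⁻ y in ball x (2 * ρ), f y ∂μ := by
        gcongr
        intro y hy
        rw [mem_ball, dist_comm]
        exact hy.2

theorem setLIntegral_le_measure_rpow {α : Type*} [MeasurableSpace α] {μ : Measure α} {p q : ℝ}
    (hpq : p.HolderConjugate q) {f : α → ℝ≥0∞} (hf : AEMeasurable f μ)
    (hf1 : (∫⁻ y, f y ^ p ∂μ) ^ (1 / p) ≤ 1) (s : Set α) :
    ∫⁻ y in s, f y ∂μ ≤ μ s ^ (1 / q) := by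
  have hHolder := ENNReal.lintegral_mul_le_Lp_mul_Lq (μ.restrict s) hpq hf.restrict
    (aemeasurable_const (b := (1 : ℝ≥0∞)))
  simp only [Pi.mul_apply, mul_one, ENNReal.one_rpow, lintegral_const, one_mul,
    Measure.restrict_apply_univ] at hHolder
  have hfs : (∫⁻ y in s, f y ^ p ∂μ) ^ (1 / p) ≤ 1 :=
    (ENNReal.rpow_le_rpow (setLIntegral_le_lintegral s _) hpq.one_div_nonneg).trans hf1
  calc ∫⁻ y in s, f y ∂μ ≤ (∫⁻ y in s, f y ^ p ∂μ) ^ (1 / p) * μ s ^ (1 / q) := hHolder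
    _ ≤ μ s ^ (1 / q) := mul_le_of_le_one_left' hfs

section Euclidean

variable {n : ℕ} {a : ℝ → ℝ} {C D lam ρ : ℝ}

theorem setLIntegral_ball_le_volume_mul_maximalFn (f : EuclideanSpace ℝ (Fin n) → ℝ≥0∞)
    (x : EuclideanSpace ℝ (Fin n)) {R : ℝ} (hR : 0 < R) :
    ∫⁻ y in ball x R, f y ≤ volume (ball x R) * maximalFn n f x := by
  rw [← ENNReal.inv_mul_le_iff (measure_ball_pos _ _ hR).ne' measure_ball_lt_top.ne]
  exact le_iSup₂ (f := fun R (_ : 0 < R) => (volume (ball x R))⁻¹ * ∫⁻ y in ball x R, f y) R hR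

theorem volume_ball_eq_ofReal_pow_mul (x : EuclideanSpace ℝ (Fin n)) {R : ℝ} (hR : 0 < R) :
    volume (ball x R) =
      ENNReal.ofReal (R ^ n) * volume (ball (0 : EuclideanSpace ℝ (Fin n)) 1) := by
  rw [Measure.addHaar_ball_of_pos volume x hR, finrank_euclideanSpace_fin]

theorem setLIntegral_dyadic_shell_le_maximalFn (hD : HasDoublingBound a D) (hD0 : 0 ≤ D)
    (ha : ∀ t, 0 < t → 0 ≤ a t) (f : EuclideanSpace ℝ (Fin n) → ℝ≥0∞)
    (x : EuclideanSpace ℝ (Fin n)) (hρ : 0 < ρ) :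
    ∫⁻ y in dist x ⁻¹' Ico ρ (2 * ρ), ENNReal.ofReal (a (dist x y) * dist x y ^ (-(n : ℝ))) * f y ≤
      ENNReal.ofReal (2 ^ n * D) * volume (ball (0 : EuclideanSpace ℝ (Fin n)) 1) *
        maximalFn n f x * ENNReal.ofReal (a ρ) := by
  have hscale : D * a ρ * ρ ^ (-(n : ℝ)) * (2 * ρ) ^ n = 2 ^ n * D * a ρ := by
    rw [Real.rpow_neg hρ.le, Real.rpow_natCast]
    field_simp
    ring
  calc _ ≤ ENNReal.ofReal (D * a ρ * ρ ^ (-(n : ℝ))) * ∫⁻ y in ball x (2 * ρ), f y :=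
        setLIntegral_dyadic_shell_le volume hD hD0 ha n.cast_nonneg f x hρ
    _ ≤ ENNReal.ofReal (D * a ρ * ρ ^ (-(n : ℝ))) * (ENNReal.ofReal ((2 * ρ) ^ n) *
          volume (ball (0 : EuclideanSpace ℝ (Fin n)) 1) * maximalFn n f x) := by
        rw [← volume_ball_eq_ofReal_pow_mul x (by positivity)]
        gcongr
        exact setLIntegral_ball_le_volume_mul_maximalFn f x (by positivity)
    _ = _ := by
        rw [← mul_assoc, ← mul_assoc, ← ENNReal.ofReal_mul (mul_nonneg (mul_nonneg hD0 (ha ρ hρ))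
          (Real.rpow_nonneg hρ.le _)), hscale, ENNReal.ofReal_mul (by positivity)]
        ring

theorem setLIntegral_dyadic_shell_le_rpow {p q : ℝ} (hpq : p.HolderConjugate q)
    (hD : HasDoublingBound a D) (hD0 : 0 ≤ D) (ha : ∀ t, 0 < t → 0 ≤ a t)
    {f : EuclideanSpace ℝ (Fin n) → ℝ≥0∞} (hf : Measurable f) (hf1 : (∫⁻ y, f y ^ p) ^ (1 / p) ≤ 1)
    (x : EuclideanSpace ℝ (Fin n)) (hρ : 0 < ρ) :
    ∫⁻ y in dist x ⁻¹' Ico ρ (2 * ρ), ENNReal.ofReal (a (dist x y) * dist x y ^ (-(n : ℝ))) * f y ≤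
      ENNReal.ofReal (2 ^ ((n : ℝ) / q) * D) *
        volume (ball (0 : EuclideanSpace ℝ (Fin n)) 1) ^ (1 / q) *
          ENNReal.ofReal (a ρ * ρ ^ (-(n : ℝ) / p)) := by
  have hscale :
      ρ ^ (-(n : ℝ)) * ((2 * ρ) ^ n) ^ (1 / q) = 2 ^ ((n : ℝ) / q) * ρ ^ (-(n : ℝ) / p) := by
    rw [← Real.rpow_natCast, ← Real.rpow_mul (by positivity), mul_one_div,
      Real.mul_rpow zero_le_two hρ.le, mul_left_comm, ← Real.rpow_add hρ]
    congr 2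
    linear_combination (n : ℝ) * hpq.inv_add_inv_eq_one
  have hq : 0 ≤ 1 / q := hpq.symm.one_div_nonneg
  calc _ ≤ ENNReal.ofReal (D * a ρ * ρ ^ (-(n : ℝ))) * ∫⁻ y in ball x (2 * ρ), f y :=
        setLIntegral_dyadic_shell_le volume hD hD0 ha n.cast_nonneg f x hρ
    _ ≤ ENNReal.ofReal (D * a ρ * ρ ^ (-(n : ℝ))) * (ENNReal.ofReal ((2 * ρ) ^ n) *
          volume (ball (0 : EuclideanSpace ℝ (Fin n)) 1)) ^ (1 / q) := by
        rw [← volume_ball_eq_ofReal_pow_mul x (by positivity)]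
        gcongr
        exact setLIntegral_le_measure_rpow hpq hf.aemeasurable hf1 _
    _ = ENNReal.ofReal (D * a ρ * (ρ ^ (-(n : ℝ)) * ((2 * ρ) ^ n) ^ (1 / q))) *
          volume (ball (0 : EuclideanSpace ℝ (Fin n)) 1) ^ (1 / q) := by
        rw [ENNReal.mul_rpow_of_nonneg _ _ hq, ENNReal.ofReal_rpow_of_nonneg (by positivity) hq,
          ← mul_assoc, ← ENNReal.ofReal_mul (mul_nonneg (mul_nonneg hD0 (ha ρ hρ))
          (Real.rpow_nonneg hρ.le _))]
        ring_nf
    _ = _ := by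
        rw [hscale, show D * a ρ * (2 ^ ((n : ℝ) / q) * ρ ^ (-(n : ℝ) / p)) =
          2 ^ ((n : ℝ) / q) * D * (a ρ * ρ ^ (-(n : ℝ) / p)) by ring,
          ENNReal.ofReal_mul (mul_nonneg (by positivity) hD0)]
        ring

theorem tsum_setLIntegral_inner_dyadic_shells_le (hD : HasDoublingBound a D) (hD0 : 0 ≤ D)
    (ha : ∀ t, 0 < t → 0 ≤ a t) (f : EuclideanSpace ℝ (Fin n) → ℝ≥0∞)
    (x : EuclideanSpace ℝ (Fin n)) {r : ℝ} (hr : 0 < r) :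
    ∑' j : ℕ, ∫⁻ y in dist x ⁻¹' Ico (2 ^ (-((j : ℤ) + 1)) * r) (2 * (2 ^ (-((j : ℤ) + 1)) * r)),
        ENNReal.ofReal (a (dist x y) * dist x y ^ (-(n : ℝ))) * f y ≤
      ENNReal.ofReal (2 ^ n * D) * volume (ball (0 : EuclideanSpace ℝ (Fin n)) 1) *
        maximalFn n f x * (2 * ENNReal.ofReal D * ∫⁻ t in Ioc 0 r, ENNReal.ofReal (a t / t)) := by
  refine (ENNReal.tsum_le_tsum fun j =>
    setLIntegral_dyadic_shell_le_maximalFn hD hD0 ha f x (by positivity)).trans ?_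
  rw [ENNReal.tsum_mul_left]
  gcongr
  exact hD.tsum_ofReal_le_lintegral hD0 ha hr

theorem tsum_setLIntegral_outer_dyadic_shells_le {p q : ℝ} (hpq : p.HolderConjugate q)
    (hg : PowerGrowth a C lam) (hC : 0 ≤ C) (hD : HasDoublingBound a D) (hD0 : 0 ≤ D)
    (ha : ∀ t, 0 < t → 0 ≤ a t) {f : EuclideanSpace ℝ (Fin n) → ℝ≥0∞} (hf : Measurable f)
    (hf1 : (∫⁻ y, f y ^ p) ^ (1 / p) ≤ 1) (x : EuclideanSpace ℝ (Fin n)) {r : ℝ} (hr : 0 < r) :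
    ∑' j : ℕ, ∫⁻ y in dist x ⁻¹' Ico (2 ^ (j : ℤ) * r) (2 * (2 ^ (j : ℤ) * r)),
        ENNReal.ofReal (a (dist x y) * dist x y ^ (-(n : ℝ))) * f y ≤
      ENNReal.ofReal (2 ^ ((n : ℝ) / q) * D) *
        volume (ball (0 : EuclideanSpace ℝ (Fin n)) 1) ^ (1 / q) *
        (ENNReal.ofReal C * (1 - ENNReal.ofReal (2 ^ (lam + -(n : ℝ) / p)))⁻¹ *
          ((2 * ENNReal.ofReal D * ∫⁻ t in Ioc 0 r, ENNReal.ofReal (a t / t)) *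
            ENNReal.ofReal (r ^ (-(n : ℝ) / p)))) := by
  refine (ENNReal.tsum_le_tsum fun j =>
    setLIntegral_dyadic_shell_le_rpow hpq hD hD0 ha hf hf1 x (by positivity)).trans ?_
  rw [ENNReal.tsum_mul_left]
  gcongr
  refine (hg.tsum_ofReal_mul_rpow_le hC ha _ hr).trans ?_
  rw [ENNReal.ofReal_mul (ha r hr)]
  gcongr
  exact hD.ofReal_le_lintegral_Ioc hD0 ha hr

end Euclidean

theorem exists_lintegral_potential_le {n : ℕ} (hn : n ≠ 0) {p q : ℝ} (hpq : p.HolderConjugate q)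
    {a : ℝ → ℝ} {C lam : ℝ} (ha : ∀ t, 0 < t → 0 ≤ a t) (hg : PowerGrowth a C lam) (hC : 0 ≤ C)
    (hlam : lam < n / p) :
    ∃ c : ℝ≥0∞, c ≠ ⊤ ∧ ∀ f : EuclideanSpace ℝ (Fin n) → ℝ≥0∞, Measurable f →
      (∫⁻ y, f y ^ p) ^ (1 / p) ≤ 1 → ∀ (x : EuclideanSpace ℝ (Fin n)) (r : ℝ), 0 < r →
        ∫⁻ y, ENNReal.ofReal (a (dist x y) * dist x y ^ (-(n : ℝ))) * f y ≤
          c * (maximalFn n f x + ENNReal.ofReal (r ^ (-(n : ℝ) / p))) *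
            ∫⁻ t in Ioc 0 r, ENNReal.ofReal (a t / t) := by
  have : NeZero n := ⟨hn⟩
  set D := C * 2 ^ |lam|
  have hD := hg.hasDoublingBound hC ha
  have hD0 : 0 ≤ D := by positivity
  set ν := volume (ball (0 : EuclideanSpace ℝ (Fin n)) 1)
  set θ : ℝ := 2 ^ (lam + -(n : ℝ) / p)
  have hθ : θ < 1 := Real.rpow_lt_one_of_one_lt_of_neg one_lt_two (by rw [neg_div]; linarith)
  set cInner := ENNReal.ofReal (2 ^ n * D) * ν * (2 * ENNReal.ofReal D)
  set cOuter := ENNReal.ofReal (2 ^ ((n : ℝ) / q) * D) * ν ^ (1 / q) *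
    (ENNReal.ofReal C * (1 - ENNReal.ofReal θ)⁻¹) * (2 * ENNReal.ofReal D)
  have hgeom : (1 - ENNReal.ofReal θ)⁻¹ ≠ ⊤ :=
    ENNReal.inv_ne_top.mpr (tsub_pos_of_lt (ENNReal.ofReal_lt_one.mpr hθ)).ne'
  have hν : ν ≠ ⊤ := measure_ball_lt_top.ne
  have hνq : ν ^ (1 / q) ≠ ⊤ := ENNReal.rpow_ne_top_of_nonneg hpq.symm.one_div_nonneg hν
  refine ⟨max cInner cOuter, max_ne_top (by finiteness) (by finiteness), fun f hf hf1 x r hr => ?_⟩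
  set A := ∫⁻ t in Ioc 0 r, ENNReal.ofReal (a t / t)
  rw [lintegral_eq_tsum_setLIntegral_dyadic_shell volume _ x hr,
    tsum_of_nat_of_neg_add_one ENNReal.summable ENNReal.summable]
  calc _ ≤ cOuter * ENNReal.ofReal (r ^ (-(n : ℝ) / p)) * A + cInner * maximalFn n f x * A :=
        add_le_add
          ((tsum_setLIntegral_outer_dyadic_shells_le hpq hg hC hD hD0 ha hf hf1 x hr).trans_eq
            (by ring))
          ((tsum_setLIntegral_inner_dyadic_shells_le hD hD0 ha f x hr).trans_eq (by ring))
    _ ≤ max cInner cOuter * ENNReal.ofReal (r ^ (-(n : ℝ) / p)) * A +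
          max cInner cOuter * maximalFn n f x * A := by
        gcongr
        exacts [le_max_right _ _, le_max_left _ _]
    _ = _ := by ring

theorem potential_le_hedberg_general
    (n : ℕ) (hn : 1 ≤ n) (p : ℝ) (hp : 1 < p)
    (a : ℝ → ℝ) (ha : ∀ t : ℝ, 0 < t → 0 ≤ a t)
    (lam : ℝ) (hlamnp : lam < n / p)
    (hdec : ∃ C > (0 : ℝ), ∀ t₁ t₂ : ℝ, 0 < t₁ → t₁ < t₂ →
      a t₂ / t₂ ^ lam ≤ C * (a t₁ / t₁ ^ lam)) :
    ∃ C > (0 : ℝ), ∀ f : EuclideanSpace ℝ (Fin n) → ℝ≥0∞, Measurable f →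
      (∫⁻ y, f y ^ p) ^ (1 / p) ≤ 1 →
      ∀ (x : EuclideanSpace ℝ (Fin n)) (r : ℝ), 0 < r →
        (∫⁻ y, ENNReal.ofReal (a (dist x y) * dist x y ^ (-(n : ℝ))) * f y) ≤
          ENNReal.ofReal C * (maximalFn n f x + ENNReal.ofReal (r ^ (-(n : ℝ) / p))) *
            ∫⁻ t in Ioc (0 : ℝ) r, ENNReal.ofReal (a t / t) := by
  obtain ⟨C, -, hdec⟩ := hdec
  obtain ⟨c, hc, hbound⟩ := exists_lintegral_potential_le (by omega)
    (Real.HolderConjugate.conjExponent hp) ha (powerGrowth_of_almostDecreasing ha hdec)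
    (zero_le_one.trans (le_max_left 1 C)) hlamnp
  refine ⟨c.toReal + 1, by positivity, fun f hf hf1 x r hr => (hbound f hf hf1 x r hr).trans ?_⟩
  gcongr
  exact (ENNReal.le_ofReal_iff_toReal_le hc (by positivity)).mpr
    (le_add_of_nonneg_right zero_le_one)

/-- Hedberg estimate for the generalized potential
`I_a f(x) = ∫_{ℝⁿ} a(|x-y|)|x-y|^{-n} f(y) dy`: for `‖f‖_{L^p} ≤ 1`,
`I_a f(x) ≤ C (Mf(x) + r^{-n/p}) A(r)` where `A(r) = ∫₀^r a(t)/t dt`. -/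
theorem potential_le_hedberg
    (n : ℕ) (hn : 1 ≤ n) (p : ℝ) (hp : 1 < p)
    (a : ℝ → ℝ) (ha : ∀ t : ℝ, 0 < t → 0 ≤ a t)
    (hinc : ∃ C > (0 : ℝ), ∀ t₁ t₂ : ℝ, 0 < t₁ → t₁ < t₂ → a t₁ ≤ C * a t₂)
    (lam : ℝ) (hlam0 : 0 < lam) (hlamnp : lam < n / p)
    (hdec : ∃ C > (0 : ℝ), ∀ t₁ t₂ : ℝ, 0 < t₁ → t₁ < t₂ →
      a t₂ / t₂ ^ lam ≤ C * (a t₁ / t₁ ^ lam))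
    (hfin : (∫⁻ t in Ioc (0 : ℝ) 1, ENNReal.ofReal (a t / t)) < ⊤) :
    ∃ C > (0 : ℝ), ∀ f : EuclideanSpace ℝ (Fin n) → ℝ≥0∞, Measurable f →
      (∫⁻ y, f y ^ p) ^ (1 / p) ≤ 1 →
      ∀ (x : EuclideanSpace ℝ (Fin n)) (r : ℝ), 0 < r →
        (∫⁻ y, ENNReal.ofReal (a (dist x y) * dist x y ^ (-(n : ℝ))) * f y) ≤
          ENNReal.ofReal C * (maximalFn n f x + ENNReal.ofReal (r ^ (-(n : ℝ) / p))) *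
            ∫⁻ t in Ioc (0 : ℝ) r, ENNReal.ofReal (a t / t) :=
  potential_le_hedberg_general n hn p hp a ha lam hlamnp hdec
end
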